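/- Let X be a shift space over a finite alphabet A and let a, b ∈ A with a ≠ b. Then X is flow equivalent to X^{a↦ab}, the shift space obtained by replacing every occurrence of the letter a by the two-letter word ab in every point of X and closing the resulting set under the shift map. -/

import Mathlib

open Filter

namespace SymbDyn

/-- A point of a (full) shift: a bi-infinite sequence of symbols, where symbols
are drawn from the universal symbol set `ℕ`. -/
abbrev Point : Type := ℤ → ℕ

/-- The shift map `σ`, with `σ(x) i = x (i + 1)`. -/
def shift (x : Point) : Point := fun i => x (i + 1)

/-- The word `w` occurs in `x` starting at position `i`. -/
def MatchesAt (w : List ℕ) (x : Point) (i : ℤ) : Prop :=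
  ∀ j : Fin w.length, x (i + ((j : ℕ) : ℤ)) = w.get j

/-- The word `w` occurs (as a factor) somewhere in the point `x`. -/
def occursIn (w : List ℕ) (x : Point) : Prop := ∃ i : ℤ, MatchesAt w x i

/-- All points over the alphabet `A` in which no word of `F` occurs. -/
def XF (A : Set ℕ) (F : Set (List ℕ)) : Set Point :=
  { x | (∀ i, x i ∈ A) ∧ ∀ w ∈ F, ¬ occursIn w x }

/-- A shift space: a set of the form `X_F` over some finite alphabet. -/
def IsShiftSpace (X : Set Point) : Prop :=
  ∃ A : Set ℕ, A.Finite ∧ ∃ F : Set (List ℕ), X = XF A F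

/-- A shift of finite type: `X_F` for a finite set `F` of forbidden words. -/
def IsSFT (X : Set Point) : Prop :=
  ∃ A : Set ℕ, A.Finite ∧ ∃ F : Set (List ℕ), F.Finite ∧ X = XF A F

/-- The language `B(X)` of a shift space `X`. -/
def language (X : Set Point) : Set (List ℕ) := { w | ∃ x ∈ X, occursIn w x }

/-- The words of length `n` in the language of `X`, i.e. `B_n(X)`. -/
def Bn (X : Set Point) (n : ℕ) : Set (List ℕ) := { w ∈ language X | w.length = n }

/-- The set of symbols actually occurring in points of `X`. -/
def alphabet (X : Set Point) : Set ℕ := { a | ∃ x ∈ X, ∃ i : ℤ, x i = a }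

/-- `φ` is a sliding block code from `X` to `Y`: it maps `X` into `Y` and there are
`m, n` and a block map `Φ` with `φ(x) i = Φ (x (i - m) … x (i + n))` on `X`. -/
def IsSlidingBlockCode (X Y : Set Point) (φ : Point → Point) : Prop :=
  Set.MapsTo φ X Y ∧
    ∃ (m n : ℕ) (Φ : List ℕ → ℕ), ∀ x ∈ X, ∀ i : ℤ,
      φ x i = Φ (List.ofFn fun j : Fin (m + n + 1) => x (i - (m : ℤ) + ((j : ℕ) : ℤ)))

/-- `X` and `Y` are conjugate: there is a bijective sliding block code from `X` onto `Y`. -/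
def Conjugate (X Y : Set Point) : Prop :=
  ∃ φ : Point → Point, IsSlidingBlockCode X Y φ ∧ Set.BijOn φ X Y

/-- A sofic shift: the image of a shift of finite type under a surjective sliding
block code. -/
def IsSofic (X : Set Point) : Prop :=
  ∃ Z : Set Point, IsSFT Z ∧ ∃ φ : Point → Point,
    IsSlidingBlockCode Z X φ ∧ Set.SurjOn φ Z X

/-- `y` is obtained from `x` by replacing every occurrence of the word `u` by the
word `v` (up to an overall shift).  Here `s k` enumerates, in order, the starting
positions of the blocks of `x` (each block being either an occurrence of `u`, all
occurrences of `u` being blocks, or a single letter), and `t k` is the starting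
position in `y` of the block corresponding to block `k` of `x`. -/
def ReplacedBy (u v : List ℕ) (x y : Point) : Prop :=
  u ≠ [] ∧
    ∃ s t : ℤ → ℤ,
      (∀ i : ℤ, MatchesAt u x i → ∃ k, s k = i) ∧
      (∀ m : ℤ, ∃ k, t k ≤ m ∧ m < t (k + 1)) ∧
      ∀ k : ℤ,
        (MatchesAt u x (s k) →
          s (k + 1) = s k + (u.length : ℤ) ∧ t (k + 1) = t k + (v.length : ℤ) ∧
            ∀ j : Fin v.length, y (t k + ((j : ℕ) : ℤ)) = v.get j) ∧
        (¬ MatchesAt u x (s k) →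
          s (k + 1) = s k + 1 ∧ t (k + 1) = t k + 1 ∧ y (t k) = x (s k))

/-- `X^{u ↦ v}`: the set obtained from `X` by replacing every occurrence of the
word `u` by the word `v` in every point, closed under the shift map. -/
def ReplaceWord (u v : List ℕ) (X : Set Point) : Set Point :=
  { y | ∃ x ∈ X, ReplacedBy u v x y }

/-- `Y` is a symbol expansion `X^{a ↦ a◊}` of `X`, for a letter `a` of `X` and a
symbol `◊` not in the alphabet of `X`. -/
def IsSymbolExpansionOf (Y X : Set Point) : Prop :=
  ∃ a dia : ℕ, a ∈ alphabet X ∧ dia ∉ alphabet X ∧ Y = ReplaceWord [a] [a, dia] X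

/-- One step of the Parry–Sullivan chain: both sets are shift spaces, and they are
conjugate or one is a symbol expansion of the other. -/
def FEStep (X Y : Set Point) : Prop :=
  IsShiftSpace X ∧ IsShiftSpace Y ∧
    (Conjugate X Y ∨ Conjugate Y X ∨ IsSymbolExpansionOf Y X ∨ IsSymbolExpansionOf X Y)

/-- Flow equivalence (Parry–Sullivan): a finite chain of conjugacies and symbol
expansions/contractions. -/
def FlowEquiv (X Y : Set Point) : Prop := Relation.ReflTransGen FEStep X Y

/-- The entropy `h(X) = lim_{n→∞} (1/n) log₂ |B_n(X)|` of a shift space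
(stated via `limsup`; for shift spaces the limit exists). -/
noncomputable def entropy (X : Set Point) : ℝ :=
  Filter.limsup (fun n : ℕ => Real.logb 2 ((Bn X n).ncard : ℝ) / (n : ℝ)) Filter.atTop

/-- `h([X])`: the set of entropies of shift spaces flow equivalent to `X`. -/
def entropySet (X : Set Point) : Set ℝ :=
  { r | ∃ Y : Set Point, IsShiftSpace Y ∧ FlowEquiv Y X ∧ entropy Y = r }

/-- A set of reals is dense in `ℝ⁺`. -/
def DenseInPos (s : Set ℝ) : Prop :=
  ∀ r : ℝ, 0 < r → ∀ ε : ℝ, 0 < ε → ∃ e ∈ s, |e - r| < ε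

/-- `X` is irreducible: any two words of the language can be joined inside it. -/
def IrreducibleShift (X : Set Point) : Prop :=
  ∀ u ∈ language X, ∀ v ∈ language X, ∃ w : List ℕ, u ++ w ++ v ∈ language X

/-- `w` is intrinsically synchronising for `X`. -/
def IntrinsicallySynchronising (X : Set Point) (w : List ℕ) : Prop :=
  ∀ v u : List ℕ, v ++ w ∈ language X → w ++ u ∈ language X →
    v ++ w ++ u ∈ language X

/-- `X` admits non-trivial `w`-overlaps: there is a word `v` in the language of `X`
with `|w| < |v| < 2|w|` having `w` both as a prefix and as a suffix. -/
def AdmitsNontrivialOverlaps (X : Set Point) (w : List ℕ) : Prop :=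
  ∃ v ∈ language X, w.length < v.length ∧ v.length < 2 * w.length ∧ w <+: v ∧ w <:+ v

/-- The full shift over the alphabet `A`. -/
def fullShift (A : Set ℕ) : Set Point := { x | ∀ i, x i ∈ A }

/-- The word `1 0^k 1`. -/
def gapWord (k : ℕ) : List ℕ := 1 :: (List.replicate k 0 ++ [1])

open Classical in
/-- The forbidden words of the `S`-gap shift. -/
noncomputable def sGapForbidden (S : Set ℕ) : Set (List ℕ) :=
  if S.Finite then
    { w | ∃ k : ℕ, k ∉ S ∧ k < sSup S ∧ w = gapWord k } ∪ {List.replicate (1 + sSup S) 0}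
  else
    { w | ∃ k : ℕ, k ∉ S ∧ w = gapWord k }

/-- The `S`-gap shift `X(S)` over the alphabet `{0, 1}`. -/
noncomputable def sGapShift (S : Set ℕ) : Set Point :=
  XF {0, 1} (sGapForbidden S)



section FlowAux

set_option linter.unnecessarySimpa false

private def ExpStep (a : ℕ) (x : Point) (t : ℤ → ℤ) : Prop :=
  ∀ k, t (k + 1) = t k + (if x k = a then 2 else 1)

variable {a c : ℕ} {x y : Point} {t : ℤ → ℤ}

private lemma expStep_bounds (h : ExpStep a x t) (k : ℤ) :
    t k + 1 ≤ t (k + 1) ∧ t (k + 1) ≤ t k + 2 := by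
  have := h k; split at this <;> omega

private lemma expStep_add_nat (h : ExpStep a x t) (j : ℤ) : ∀ n : ℕ, t j + n ≤ t (j + n)
  | 0 => by simp
  | n + 1 => by
    have h1 := expStep_add_nat h j n
    have h2 := (expStep_bounds h (j + n)).1
    have e : j + ((n + 1 : ℕ) : ℤ) = (j + n) + 1 := by push_cast; ring
    rw [e]; push_cast at h1 ⊢; omega

private lemma expStep_lt (h : ExpStep a x t) {j k : ℤ} (hjk : j < k) : t j < t k := by
  have h1 := expStep_add_nat h j (k - j).toNat
  have e : ((k - j).toNat : ℤ) = k - j := Int.toNat_of_nonneg (by omega)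
  rw [e] at h1
  have : j + (k - j) = k := by ring
  rw [this] at h1
  omega

private lemma expStep_mono (h : ExpStep a x t) {j k : ℤ} (hjk : j ≤ k) : t j ≤ t k := by
  rcases eq_or_lt_of_le hjk with rfl | h' 
  · exact le_refl _
  · exact (expStep_lt h h').le

private lemma expStep_cover (h : ExpStep a x t) (m : ℤ) :
    ∃ k, t k ≤ m ∧ m < t (k + 1) := by
  have hbdd : ∃ b : ℤ, ∀ z : ℤ, t z ≤ m → z ≤ b := by
    refine ⟨(m - t 0).toNat, fun z hz => ?_⟩
    by_cases h0 : z ≤ 0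
    · have : (0:ℤ) ≤ ((m - t 0).toNat : ℤ) := Int.ofNat_nonneg _
      omega
    · have h1 := expStep_add_nat h 0 z.toNat
      have e : ((z.toNat : ℤ)) = z := Int.toNat_of_nonneg (by omega)
      rw [e] at h1
      simp at h1
      have : (0:ℤ) ≤ m - t 0 := by omega
      have := Int.toNat_of_nonneg this
      omega
  have hinh : ∃ z : ℤ, t z ≤ m := by
    refine ⟨0 - (t 0 - m).toNat, ?_⟩
    have h1 := expStep_add_nat h (0 - (t 0 - m).toNat) (t 0 - m).toNat
    have e : 0 - ((t 0 - m).toNat : ℤ) + ((t 0 - m).toNat : ℤ) = 0 := by ring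
    rw [e] at h1
    have h2 : t 0 - m ≤ ((t 0 - m).toNat : ℤ) := Int.self_le_toNat _
    omega
  obtain ⟨k, hk, hmax⟩ := Int.exists_greatest_of_bdd hbdd hinh
  refine ⟨k, hk, ?_⟩
  by_contra hc
  have := hmax (k + 1) (by omega)
  omega

private lemma expStep_not_range (h : ExpStep a x t) {m : ℤ} (hm : ∀ j, t j ≠ m) :
    ∃ k, m = t k + 1 ∧ x k = a := by
  obtain ⟨k, h1, h2⟩ := expStep_cover h m
  have hb := expStep_bounds h k
  have hne := hm k
  have hm2 : m = t k + 1 := by omega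
  refine ⟨k, hm2, ?_⟩
  have := h k
  split at this
  · assumption
  · omega

private lemma expStep_between (h : ExpStep a x t) {k m : ℤ} (h1 : t k < m) (h2 : m < t (k + 1)) :
    ∀ j, t j ≠ m := by
  intro j hj
  rcases lt_trichotomy j k with hc | rfl | hc
  · have := expStep_lt h hc; omega
  · omega
  · have : k + 1 ≤ j := by omega
    have := expStep_mono h this; omega

private lemma matchesAt_nil (x : Point) (i : ℤ) : MatchesAt [] x i := by
  intro j; exact absurd j.isLt (by simp)

private lemma matchesAt_cons {p : ℕ} {r : List ℕ} {x : Point} {i : ℤ} :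
    MatchesAt (p :: r) x i ↔ x i = p ∧ MatchesAt r x (i + 1) := by
  constructor
  · intro h
    refine ⟨by simpa using h ⟨0, by simp⟩, fun j => ?_⟩
    have h2 := h ⟨j.1 + 1, by simpa using j.isLt⟩
    have e : i + ((j.1 + 1 : ℕ) : ℤ) = i + 1 + (j.1 : ℤ) := by push_cast; ring
    rw [e] at h2
    simpa using h2
  · rintro ⟨h1, h2⟩ j
    rcases j with ⟨jv, hj⟩
    cases jv with
    | zero => simpa using h1
    | succ n =>
      have h3 := h2 ⟨n, by simpa using hj⟩
      have e : i + ((n + 1 : ℕ) : ℤ) = i + 1 + (n : ℤ) := by push_cast; ring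
      rw [e]
      simpa using h3

private lemma matchesAt_single {p : ℕ} {x : Point} {i : ℤ} :
    MatchesAt [p] x i ↔ x i = p := by
  rw [matchesAt_cons]
  simp [matchesAt_nil]

private def ExpRel (a c : ℕ) (x y : Point) (t : ℤ → ℤ) : Prop :=
  ExpStep a x t ∧ (∀ k, y (t k) = x k) ∧ (∀ k, x k = a → y (t k + 1) = c)

private lemma expRel_val (h : ExpRel a c x y t) (m : ℤ) :
    (∃ k, m = t k ∧ y m = x k) ∨ (∃ k, m = t k + 1 ∧ x k = a ∧ y m = c) := by
  obtain ⟨k, h1, h2⟩ := expStep_cover h.1 m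
  by_cases hm : m = t k
  · exact Or.inl ⟨k, hm, by rw [hm]; exact h.2.1 k⟩
  · have hb := expStep_bounds h.1 k
    have hm2 : m = t k + 1 := by omega
    have hstep := h.1 k
    have hxa : x k = a := by
      by_contra hxa
      rw [if_neg hxa] at hstep; omega
    exact Or.inr ⟨k, hm2, hxa, by rw [hm2]; exact h.2.2 k hxa⟩

private def expandW (a c : ℕ) : List ℕ → List ℕ
  | [] => []
  | p :: r => if p = a then p :: c :: expandW a c r else p :: expandW a c r

private lemma exp_matches (h : ExpRel a c x y t) :
    ∀ (w : List ℕ) (k : ℤ), MatchesAt w x k ↔ MatchesAt (expandW a c w) y (t k) := by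
  intro w
  induction w with
  | nil => intro k; simp [expandW, matchesAt_nil]
  | cons p r ih =>
    intro k
    by_cases hp : p = a
    · subst hp
      rw [show expandW p c (p :: r) = p :: c :: expandW p c r from by simp [expandW]]
      rw [matchesAt_cons, matchesAt_cons, matchesAt_cons]
      constructor
      · rintro ⟨h1, h2⟩
        have hstep := h.1 k
        rw [if_pos h1] at hstep
        refine ⟨by rw [h.2.1 k]; exact h1, h.2.2 k h1, ?_⟩
        have := (ih (k + 1)).1 h2
        rw [hstep] at this
        rw [show t k + 1 + 1 = t k + 2 from by ring]
        exact this
      · rintro ⟨h1, h2, h3⟩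
        have hx1 : x k = p := by rw [← h.2.1 k]; exact h1
        have hstep := h.1 k
        rw [if_pos hx1] at hstep
        refine ⟨hx1, (ih (k + 1)).2 ?_⟩
        rw [hstep]
        rw [show t k + 1 + 1 = t k + 2 from by ring] at h3
        exact h3
    · rw [show expandW a c (p :: r) = p :: expandW a c r from by simp [expandW, hp]]
      rw [matchesAt_cons, matchesAt_cons]
      constructor
      · rintro ⟨h1, h2⟩
        have hxa : ¬ x k = a := by rw [h1]; exact hp
        have hstep := h.1 k
        rw [if_neg hxa] at hstep
        refine ⟨by rw [h.2.1 k]; exact h1, ?_⟩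
        have := (ih (k + 1)).1 h2
        rwa [hstep] at this
      · rintro ⟨h1, h2⟩
        have hx1 : x k = p := by rw [← h.2.1 k]; exact h1
        have hxa : ¬ x k = a := by rw [hx1]; exact hp
        have hstep := h.1 k
        rw [if_neg hxa] at hstep
        exact ⟨hx1, (ih (k + 1)).2 (by rwa [hstep])⟩

private lemma int_step_eq {f : ℤ → ℤ} (h : ∀ k, f (k + 1) = f k + 1) : ∀ k, f k = f 0 + k := by
  intro k
  induction k using Int.induction_on with
  | zero => simp
  | succ n ih => rw [h n]; omega
  | pred n ih =>
    have h2 := h (-(n : ℤ) - 1)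
    rw [show -(n : ℤ) - 1 + 1 = -(n : ℤ) from by ring] at h2
    omega

private lemma replacedBy_of_expRel (h : ExpRel a c x y t) : ReplacedBy [a] [a, c] x y := by
  refine ⟨by simp, id, t, fun i _ => ⟨i, rfl⟩, fun m => ?_, fun k => ?_⟩
  · obtain ⟨k, h1, h2⟩ := expStep_cover h.1 m
    exact ⟨k, h1, h2⟩
  constructor
  · intro hm
    have hxk : x k = a := matchesAt_single.1 hm
    have hstep := h.1 k
    rw [if_pos hxk] at hstep
    refine ⟨by simp, by simpa using hstep, ?_⟩
    intro j
    rcases j with ⟨jv, hj⟩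
    have hj2 : jv = 0 ∨ jv = 1 := by simp at hj; omega
    rcases hj2 with rfl | rfl
    · simpa using (h.2.1 k).trans hxk
    · simpa using h.2.2 k hxk
  · intro hm
    have hxk : ¬ x k = a := fun hc => hm (matchesAt_single.2 hc)
    have hstep := h.1 k
    rw [if_neg hxk] at hstep
    exact ⟨by simp, by simpa using hstep, h.2.1 k⟩

private lemma of_replacedBy (hr : ReplacedBy [a] [a, c] x y) :
    ∃ p : ℤ, ∃ t : ℤ → ℤ, ExpRel a c (fun k => x (p + k)) y t := by
  obtain ⟨-, s, t, hi, hcov, hiii⟩ := hr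
  have hs1 : ∀ k, s (k + 1) = s k + 1 := by
    intro k
    by_cases hm : MatchesAt [a] x (s k)
    · have := ((hiii k).1 hm).1; simpa using this
    · have := ((hiii k).2 hm).1; simpa using this
  have hseq : ∀ k, s k = s 0 + k := int_step_eq hs1
  refine ⟨s 0, t, ?_, ?_, ?_⟩
  · intro k
    by_cases hm : x (s k) = a
    · have h2 := ((hiii k).1 (matchesAt_single.2 hm)).2.1
      have : x (s 0 + k) = a := by rw [← hseq k]; exact hm
      rw [if_pos this]
      simpa using h2
    · have h2 := ((hiii k).2 (fun hc => hm (matchesAt_single.1 hc))).2.1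
      have : ¬ x (s 0 + k) = a := by rw [← hseq k]; exact hm
      rw [if_neg this]
      simpa using h2
  · intro k
    by_cases hm : x (s k) = a
    · have h2 := ((hiii k).1 (matchesAt_single.2 hm)).2.2 ⟨0, by simp⟩
      simp only [show ((0:ℕ):ℤ) = 0 from rfl, add_zero] at h2
      show y (t k) = x (s 0 + k)
      rw [← hseq k, hm]
      simpa using h2
    · have h2 := ((hiii k).2 (fun hc => hm (matchesAt_single.1 hc))).2.2
      show y (t k) = x (s 0 + k)
      rw [← hseq k]
      exact h2
  · intro k hk
    have hm : x (s k) = a := by rw [hseq k]; exact hk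
    have h2 := ((hiii k).1 (matchesAt_single.2 hm)).2.2 ⟨1, by simp⟩
    simpa using h2

private lemma xf_shift {A : Set ℕ} {F : Set (List ℕ)} {x : Point} (hx : x ∈ XF A F) (p : ℤ) :
    (fun k => x (p + k)) ∈ XF A F := by
  refine ⟨fun i => hx.1 (p + i), fun w hw hocc => hx.2 w hw ?_⟩
  obtain ⟨i, hm⟩ := hocc
  refine ⟨p + i, fun j => ?_⟩
  have := hm j
  rw [show p + i + ((j : ℕ) : ℤ) = p + (i + ((j : ℕ) : ℤ)) from by ring]
  exact this

private lemma mem_replaceWord_iff {A : Set ℕ} {F : Set (List ℕ)} {y : Point} :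
    y ∈ ReplaceWord [a] [a, c] (XF A F) ↔
      ∃ x ∈ XF A F, ∃ t : ℤ → ℤ, ExpRel a c x y t := by
  constructor
  · rintro ⟨x, hx, hr⟩
    obtain ⟨p, t, h⟩ := of_replacedBy hr
    exact ⟨fun k => x (p + k), xf_shift hx p, t, h⟩
  · rintro ⟨x, hx, t, h⟩
    exact ⟨x, hx, replacedBy_of_expRel h⟩

private def FCset (a c : ℕ) (F : Set (List ℕ)) : Set (List ℕ) :=
  {w | ∃ p, p ≠ c ∧ w = [a, p]} ∪ {w | ∃ p v, p ≠ a ∧ v ∈ F ∧ w = p :: expandW a c v}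

private def FDset (a c : ℕ) (F : Set (List ℕ)) : Set (List ℕ) :=
  FCset a c F ∪ {w | ∃ p, p ≠ a ∧ w = [p, c]}

private lemma matchesAt_pair {p q : ℕ} {x : Point} {i : ℤ} :
    MatchesAt [p, q] x i ↔ x i = p ∧ x (i + 1) = q := by
  rw [matchesAt_cons, matchesAt_single]

-- the letters of an expansion point lie in A ∪ {c}
private lemma exp_letters {A : Set ℕ} {F : Set (List ℕ)}
    (hx : x ∈ XF A F) (h : ExpRel a c x y t) (m : ℤ) : y m ∈ A ∪ {c} := by
  rcases expRel_val h m with ⟨k, rfl, hv⟩ | ⟨k, rfl, hxa, hv⟩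
  · rw [hv]; exact Or.inl (hx.1 k)
  · rw [hv]; exact Or.inr rfl

-- an expansion point avoids every word of FCset
private lemma exp_avoids_FC {A : Set ℕ} {F : Set (List ℕ)} (hca : c ≠ a)
    (hx : x ∈ XF A F) (h : ExpRel a c x y t) :
    ∀ w ∈ FCset a c F, ¬ occursIn w y := by
  rintro w hw ⟨j, hm⟩
  rcases hw with ⟨p, hpc, rfl⟩ | ⟨p, v, hpa, hvF, rfl⟩
  · rw [matchesAt_pair] at hm
    obtain ⟨h1, h2⟩ := hm
    rcases expRel_val h j with ⟨k, hjk, hv⟩ | ⟨k, hjk, hxa, hv⟩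
    · have hxa : x k = a := by rw [← hv, h1]
      have := h.2.2 k hxa
      rw [← hjk] at this
      exact hpc (h2 ▸ this ▸ rfl)
    · exact hca (by rw [← hv, h1])
  · rw [matchesAt_cons] at hm
    obtain ⟨h1, h2⟩ := hm
    rcases expRel_val h (j + 1) with ⟨k, hjk, hv⟩ | ⟨k, hjk, hxa, hv⟩
    · rw [hjk] at h2
      have := (exp_matches h v k).2 h2
      exact hx.2 v hvF ⟨k, this⟩
    · have hj : j = t k := by omega
      have : y j = a := by rw [hj, h.2.1 k]; exact hxa
      exact hpa (by rw [← h1, this])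

private lemma exp_avoids_FD {A : Set ℕ} {F : Set (List ℕ)} (hca : c ≠ a) (hcA : c ∉ A)
    (hx : x ∈ XF A F) (h : ExpRel a c x y t) :
    ∀ w ∈ FDset a c F, ¬ occursIn w y := by
  rintro w hw hocc
  rcases hw with hw | ⟨p, hpa, rfl⟩
  · exact exp_avoids_FC hca hx h w hw hocc
  · obtain ⟨j, hm⟩ := hocc
    rw [matchesAt_pair] at hm
    obtain ⟨h1, h2⟩ := hm
    rcases expRel_val h (j + 1) with ⟨k, hjk, hv⟩ | ⟨k, hjk, hxa, hv⟩
    · rw [h2] at hv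
      exact hcA (by rw [hv]; exact hx.1 k)
    · have hj : j = t k := by omega
      have : y j = a := by rw [hj, h.2.1 k]; exact hxa
      exact hpa (by rw [← h1, this])

private lemma replace_subset_XFC {A : Set ℕ} {F : Set (List ℕ)} (hca : c ≠ a) :
    ReplaceWord [a] [a, c] (XF A F) ⊆ XF (A ∪ {c}) (FCset a c F) := by
  intro y hy
  obtain ⟨x, hx, t, h⟩ := mem_replaceWord_iff.1 hy
  exact ⟨exp_letters hx h, exp_avoids_FC hca hx h⟩

private lemma replace_subset_XFD {A : Set ℕ} {F : Set (List ℕ)} (hca : c ≠ a) (hcA : c ∉ A) :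
    ReplaceWord [a] [a, c] (XF A F) ⊆ XF (A ∪ {c}) (FDset a c F) := by
  intro y hy
  obtain ⟨x, hx, t, h⟩ := mem_replaceWord_iff.1 hy
  exact ⟨exp_letters hx h, exp_avoids_FD hca hcA hx h⟩

private def fwdT (y : Point) (a : ℕ) (j0 : ℤ) : ℕ → ℤ
  | 0 => j0
  | n + 1 => fwdT y a j0 n + (if y (fwdT y a j0 n) = a then 2 else 1)

private def bwdT (y : Point) (a : ℕ) (j0 : ℤ) : ℕ → ℤ
  | 0 => j0
  | n + 1 => if y (bwdT y a j0 n - 2) = a then bwdT y a j0 n - 2 else bwdT y a j0 n - 1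

section Build

variable {j0 : ℤ} (hFa : ∀ j, y j = a → y (j + 1) = c) (hca : c ≠ a) (hj0 : y (j0 - 1) ≠ a)

include hFa hca hj0

private lemma fwdT_inv : ∀ n, y (fwdT y a j0 n - 1) ≠ a
  | 0 => hj0
  | n + 1 => by
    show y (fwdT y a j0 n + (if y (fwdT y a j0 n) = a then 2 else 1) - 1) ≠ a
    by_cases hy : y (fwdT y a j0 n) = a
    · rw [if_pos hy, show fwdT y a j0 n + 2 - 1 = fwdT y a j0 n + 1 from by ring]
      rw [hFa _ hy]
      exact hca
    · rw [if_neg hy, show fwdT y a j0 n + 1 - 1 = fwdT y a j0 n from by ring]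
      exact hy

private lemma bwdT_inv : ∀ n, y (bwdT y a j0 n - 1) ≠ a
  | 0 => hj0
  | n + 1 => by
    show y ((if y (bwdT y a j0 n - 2) = a then bwdT y a j0 n - 2 else bwdT y a j0 n - 1) - 1) ≠ a
    by_cases hy : y (bwdT y a j0 n - 2) = a
    · rw [if_pos hy]
      intro h3
      have := hFa _ h3
      rw [show bwdT y a j0 n - 2 - 1 + 1 = bwdT y a j0 n - 2 from by ring] at this
      rw [this] at hy
      exact hca hy
    · rw [if_neg hy, show bwdT y a j0 n - 1 - 1 = bwdT y a j0 n - 2 from by ring]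
      exact hy

private lemma bwdT_step (n : ℕ) :
    bwdT y a j0 (n + 1) + (if y (bwdT y a j0 (n + 1)) = a then 2 else 1) = bwdT y a j0 n := by
  by_cases hy : y (bwdT y a j0 n - 2) = a
  · have he : bwdT y a j0 (n + 1) = bwdT y a j0 n - 2 := by
      show (if y (bwdT y a j0 n - 2) = a then bwdT y a j0 n - 2 else bwdT y a j0 n - 1) = _
      rw [if_pos hy]
    rw [he, if_pos hy]
    ring
  · have he : bwdT y a j0 (n + 1) = bwdT y a j0 n - 1 := by
      show (if y (bwdT y a j0 n - 2) = a then bwdT y a j0 n - 2 else bwdT y a j0 n - 1) = _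
      rw [if_neg hy]
    have h2 : ¬ y (bwdT y a j0 n - 1) = a := bwdT_inv hFa hca hj0 n
    rw [he, if_neg h2]
    ring

private def TTdef (y : Point) (a : ℕ) (j0 : ℤ) (k : ℤ) : ℤ :=
  if 0 ≤ k then fwdT y a j0 k.toNat else bwdT y a j0 (-k).toNat

private lemma TT_inv (k : ℤ) : y (TTdef y a j0 k - 1) ≠ a := by
  unfold TTdef
  split
  · exact fwdT_inv hFa hca hj0 _
  · exact bwdT_inv hFa hca hj0 _

private lemma TT_step (k : ℤ) :
    TTdef y a j0 (k + 1) = TTdef y a j0 k + (if y (TTdef y a j0 k) = a then 2 else 1) := by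
  by_cases hk : 0 ≤ k
  · rw [TTdef, TTdef, if_pos hk, if_pos (by omega : (0:ℤ) ≤ k + 1)]
    rw [show (k + 1).toNat = k.toNat + 1 from by omega]
    rfl
  · have hk1 : ¬ 0 ≤ k := hk
    have hneg : (-k).toNat = (-(k+1)).toNat + 1 := by omega
    have h1 : TTdef y a j0 k = bwdT y a j0 ((-(k+1)).toNat + 1) := by
      rw [TTdef, if_neg hk1, hneg]
    have h2 : TTdef y a j0 (k + 1) = bwdT y a j0 ((-(k+1)).toNat) := by
      by_cases hk2 : 0 ≤ k + 1
      · have hk3 : k + 1 = 0 := by omega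
        rw [TTdef, if_pos hk2, hk3]
        show fwdT y a j0 (0:ℤ).toNat = _
        rw [show ((-(0:ℤ)).toNat) = 0 from by omega]
        rfl
      · rw [TTdef, if_neg hk2]
    rw [h1, h2]
    have := bwdT_step hFa hca hj0 ((-(k+1)).toNat)
    omega

end Build

private lemma exists_expRel_of_local {A : Set ℕ} {F : Set (List ℕ)} (hca : c ≠ a)
    (hFa : ∀ j, y j = a → y (j + 1) = c)
    (hq : ∀ w ∈ F, ∀ q : ℕ, q ≠ a → ¬ occursIn (q :: expandW a c w) y)
    (hletters : ∀ t0 : ℤ → ℤ, (∀ m, y (t0 m - 1) ≠ a) → ∀ k, y (t0 k) ∈ A) :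
    ∃ x ∈ XF A F, ∃ t : ℤ → ℤ, ExpRel a c x y t := by
  classical
  set j0 : ℤ := if y (-1) = a then 1 else 0 with hj0def
  have hj0 : y (j0 - 1) ≠ a := by
    by_cases hy : y (-1) = a
    · rw [hj0def, if_pos hy]
      have := hFa _ hy
      rw [show (-1 : ℤ) + 1 = 0 from by ring] at this
      rw [show (1 : ℤ) - 1 = 0 from by ring, this]
      exact hca
    · rw [hj0def, if_neg hy]
      rw [show (0 : ℤ) - 1 = -1 from by ring]
      exact hy
  set T : ℤ → ℤ := TTdef y a j0 with hTdef
  have hTinv : ∀ k, y (T k - 1) ≠ a := fun k => TT_inv hFa hca hj0 k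
  have hTstep : ∀ k, T (k + 1) = T k + (if y (T k) = a then 2 else 1) := fun k =>
    TT_step hFa hca hj0 k
  refine ⟨fun k => y (T k), ⟨hletters T hTinv, ?_⟩, T, hTstep, fun k => rfl,
    fun k hk => hFa _ hk⟩
  intro w hw ⟨k, hm⟩
  have hexp : ExpRel a c (fun k => y (T k)) y T := ⟨hTstep, fun k => rfl, fun k hk => hFa _ hk⟩
  have h2 := (exp_matches hexp w k).1 hm
  have h3 : MatchesAt (y (T k - 1) :: expandW a c w) y (T k - 1) := by
    rw [matchesAt_cons]
    exact ⟨rfl, by rw [show T k - 1 + 1 = T k from by ring]; exact h2⟩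
  exact hq w hw (y (T k - 1)) (hTinv k) ⟨T k - 1, h3⟩

private lemma XFC_subset_replace {A : Set ℕ} {F : Set (List ℕ)} (hca : c ≠ a) (hcA : c ∈ A) :
    XF (A ∪ {c}) (FCset a c F) ⊆ ReplaceWord [a] [a, c] (XF A F) := by
  intro y hy
  have hFa : ∀ j, y j = a → y (j + 1) = c := by
    intro j hj
    by_contra hne
    exact hy.2 [a, y (j + 1)] (Or.inl ⟨y (j + 1), hne, rfl⟩) ⟨j, matchesAt_pair.2 ⟨hj, rfl⟩⟩
  have hq : ∀ w ∈ F, ∀ q : ℕ, q ≠ a → ¬ occursIn (q :: expandW a c w) y := by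
    intro w hw q hqa hocc
    exact hy.2 _ (Or.inr ⟨q, w, hqa, hw, rfl⟩) hocc
  have hletters : ∀ t0 : ℤ → ℤ, (∀ m, y (t0 m - 1) ≠ a) → ∀ k, y (t0 k) ∈ A := by
    intro t0 _ k
    rcases hy.1 (t0 k) with h | h
    · exact h
    · rw [h]; exact hcA
  exact mem_replaceWord_iff.2 (exists_expRel_of_local hca hFa hq hletters)

private lemma XFD_subset_replace {A : Set ℕ} {F : Set (List ℕ)} (hca : c ≠ a) (hcA : c ∉ A) :
    XF (A ∪ {c}) (FDset a c F) ⊆ ReplaceWord [a] [a, c] (XF A F) := by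
  intro y hy
  have hFa : ∀ j, y j = a → y (j + 1) = c := by
    intro j hj
    by_contra hne
    exact hy.2 [a, y (j + 1)] (Or.inl (Or.inl ⟨y (j + 1), hne, rfl⟩))
      ⟨j, matchesAt_pair.2 ⟨hj, rfl⟩⟩
  have hq : ∀ w ∈ F, ∀ q : ℕ, q ≠ a → ¬ occursIn (q :: expandW a c w) y := by
    intro w hw q hqa hocc
    exact hy.2 _ (Or.inl (Or.inr ⟨q, w, hqa, hw, rfl⟩)) hocc
  have hletters : ∀ t0 : ℤ → ℤ, (∀ m, y (t0 m - 1) ≠ a) → ∀ k, y (t0 k) ∈ A := by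
    intro t0 hinv k
    rcases hy.1 (t0 k) with h | h
    · exact h
    · exfalso
      refine hy.2 [y (t0 k - 1), c] (Or.inr ⟨y (t0 k - 1), hinv k, rfl⟩)
        ⟨t0 k - 1, matchesAt_pair.2 ⟨rfl, ?_⟩⟩
      rw [show t0 k - 1 + 1 = t0 k from by ring]
      exact h
  exact mem_replaceWord_iff.2 (exists_expRel_of_local hca hFa hq hletters)

private lemma replace_eq_XFC {A : Set ℕ} {F : Set (List ℕ)} (hca : c ≠ a) (hcA : c ∈ A) :
    ReplaceWord [a] [a, c] (XF A F) = XF (A ∪ {c}) (FCset a c F) :=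
  Set.Subset.antisymm (replace_subset_XFC hca) (XFC_subset_replace hca hcA)

private lemma replace_eq_XFD {A : Set ℕ} {F : Set (List ℕ)} (hca : c ≠ a) (hcA : c ∉ A) :
    ReplaceWord [a] [a, c] (XF A F) = XF (A ∪ {c}) (FDset a c F) :=
  Set.Subset.antisymm (replace_subset_XFD hca hcA) (XFD_subset_replace hca hcA)

private lemma replace_eq_self {A : Set ℕ} {F : Set (List ℕ)} {b : ℕ}
    (hna : ∀ x ∈ XF A F, ∀ k : ℤ, x k ≠ a) :
    ReplaceWord [a] [a, b] (XF A F) = XF A F := by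
  apply Set.Subset.antisymm
  · intro y hy
    obtain ⟨x, hx, t, h⟩ := mem_replaceWord_iff.1 hy
    have hstep : ∀ k, t (k + 1) = t k + 1 := by
      intro k
      have := h.1 k
      rw [if_neg (hna x hx k)] at this
      exact this
    have hteq : ∀ k, t k = t 0 + k := int_step_eq hstep
    have hy2 : ∀ m, y m = x (m - t 0) := by
      intro m
      have := h.2.1 (m - t 0)
      rw [hteq (m - t 0), show t 0 + (m - t 0) = m from by ring] at this
      exact this
    refine ⟨fun i => by rw [hy2 i]; exact hx.1 _, fun w hw hocc => hx.2 w hw ?_⟩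
    obtain ⟨i, hm⟩ := hocc
    refine ⟨i - t 0, fun j => ?_⟩
    have := hm j
    rw [hy2] at this
    rw [show i - t 0 + ((j : ℕ) : ℤ) = i + ((j : ℕ) : ℤ) - t 0 from by ring]
    exact this
  · intro x hx
    refine mem_replaceWord_iff.2 ⟨x, hx, id, ?_, fun k => rfl, fun k hk => absurd hk (hna x hx k)⟩
    intro k
    show k + 1 = k + _
    rw [if_neg (hna x hx k)]

private lemma conj_expansions {A : Set ℕ} {F : Set (List ℕ)} {a b d : ℕ}
    (hab : a ≠ b) (hd : d ∉ A) :
    Conjugate (ReplaceWord [a] [a, d] (XF A F)) (ReplaceWord [a] [a, b] (XF A F)) := by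
  classical
  set φ : Point → Point := fun z i => if z i = d then b else z i with hφdef
  have hmaps : Set.MapsTo φ (ReplaceWord [a] [a, d] (XF A F)) (ReplaceWord [a] [a, b] (XF A F)) := by
    intro z hz
    obtain ⟨x, hx, t, h⟩ := mem_replaceWord_iff.1 hz
    refine mem_replaceWord_iff.2 ⟨x, hx, t, h.1, fun k => ?_, fun k hk => ?_⟩
    · show (if z (t k) = d then b else z (t k)) = x k
      rw [h.2.1 k, if_neg (fun hc : x k = d => hd (hc ▸ hx.1 k))]
    · show (if z (t k + 1) = d then b else z (t k + 1)) = b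
      rw [h.2.2 k hk, if_pos rfl]
  have hrecon : ∀ z ∈ ReplaceWord [a] [a, d] (XF A F), ∀ m : ℤ,
      z m = if φ z (m - 1) = a then d else φ z m := by
    intro z hz m
    obtain ⟨x, hx, t, h⟩ := mem_replaceWord_iff.1 hz
    have hxd : ∀ k, x k ≠ d := fun k hc => hd (hc ▸ hx.1 k)
    rcases expRel_val h m with ⟨k, hmk, hv⟩ | ⟨k, hmk, hxa, hv⟩
    · have hna : φ z (m - 1) ≠ a := by
        rcases expRel_val h (m - 1) with ⟨j, hj, hvj⟩ | ⟨j, hj, hxaj, hvj⟩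
        · show (if z (m - 1) = d then b else z (m - 1)) ≠ a
          rw [hvj, if_neg (hxd j)]
          intro hc
          have hstep := h.1 j
          rw [if_pos hc] at hstep
          have hbet := expStep_between h.1 (k := j) (m := m) (by omega) (by omega) k
          exact hbet hmk.symm
        · show (if z (m - 1) = d then b else z (m - 1)) ≠ a
          rw [hvj, if_pos rfl]
          exact fun hc => hab hc.symm
      rw [if_neg hna]
      show z m = if z m = d then b else z m
      rw [hv, if_neg (hxd k), ← hv]
    · have hpa : φ z (m - 1) = a := by
        show (if z (m - 1) = d then b else z (m - 1)) = a
        have : z (m - 1) = x k := by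
          rw [show m - 1 = t k from by omega]
          exact h.2.1 k
        rw [this, if_neg (hxd k)]
        exact hxa
      rw [if_pos hpa, hv]
  have hinj : Set.InjOn φ (ReplaceWord [a] [a, d] (XF A F)) := by
    intro z1 h1 z2 h2 he
    funext m
    rw [hrecon z1 h1 m, hrecon z2 h2 m, he]
  have hsurj : Set.SurjOn φ (ReplaceWord [a] [a, d] (XF A F)) (ReplaceWord [a] [a, b] (XF A F)) := by
    intro y hy
    obtain ⟨x, hx, t, h⟩ := mem_replaceWord_iff.1 hy
    have hxd : ∀ k, x k ≠ d := fun k hc => hd (hc ▸ hx.1 k)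
    set z : Point := fun m => if ∃ k, t k = m then y m else d with hzdef
    have hnr : ∀ k, x k = a → ¬ ∃ j, t j = t k + 1 := by
      intro k hk ⟨j, hj⟩
      have hstep := h.1 k
      rw [if_pos hk] at hstep
      exact expStep_between h.1 (k := k) (m := t k + 1) (by omega) (by omega) j hj
    have hzmem : z ∈ ReplaceWord [a] [a, d] (XF A F) := by
      refine mem_replaceWord_iff.2 ⟨x, hx, t, h.1, fun k => ?_, fun k hk => ?_⟩
      · show (if ∃ j, t j = t k then y (t k) else d) = x k
        rw [if_pos ⟨k, rfl⟩]
        exact h.2.1 k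
      · show (if ∃ j, t j = t k + 1 then y (t k + 1) else d) = d
        rw [if_neg (hnr k hk)]
    refine ⟨z, hzmem, ?_⟩
    funext m
    show (if z m = d then b else z m) = y m
    rcases expRel_val h m with ⟨k, hmk, hv⟩ | ⟨k, hmk, hxa, hv⟩
    · have hzm : z m = y m := by
        show (if ∃ j, t j = m then y m else d) = y m
        rw [if_pos ⟨k, hmk.symm⟩]
      rw [hzm, hv, if_neg (hxd k), ← hv]
    · have hzm : z m = d := by
        show (if ∃ j, t j = m then y m else d) = d
        rw [hmk, if_neg (hnr k hxa)]
      rw [hzm, if_pos rfl, hv]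
  refine ⟨φ, ⟨hmaps, 0, 0, fun l => if l.headI = d then b else l.headI, ?_⟩, hmaps, hinj, hsurj⟩
  intro z _ i
  have : (List.ofFn fun j : Fin (0 + 0 + 1) => z (i - ((0 : ℕ) : ℤ) + ((j : ℕ) : ℤ))) = [z i] := by
    simp
  rw [this]
  rfl

end FlowAux

/-- For a shift space `X` over a finite alphabet `A` and distinct
letters `a, b ∈ A`, `X` is flow equivalent to `X^{a ↦ ab}`. -/
theorem stmt0 (X : Set Point) (A : Set ℕ) (hA : A.Finite)
    (hX : ∃ F : Set (List ℕ), X = XF A F)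
    (a b : ℕ) (ha : a ∈ A) (hb : b ∈ A) (hab : a ≠ b) :
    FlowEquiv X (ReplaceWord [a] [a, b] X) := by
  classical
  obtain ⟨F, rfl⟩ := hX
  by_cases haX : a ∈ alphabet (XF A F)
  · obtain ⟨d, hd⟩ : ∃ d, d ∉ A := hA.infinite_compl.nonempty
    have hda : d ≠ a := fun hc => hd (hc ▸ ha)
    have hdX : d ∉ alphabet (XF A F) := by
      rintro ⟨x, hx, i, hi⟩
      exact hd (hi ▸ hx.1 i)
    have hZshift : IsShiftSpace (ReplaceWord [a] [a, d] (XF A F)) :=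
      ⟨A ∪ {d}, hA.union (Set.finite_singleton d), FDset a d F, replace_eq_XFD hda hd⟩
    have hYshift : IsShiftSpace (ReplaceWord [a] [a, b] (XF A F)) :=
      ⟨A ∪ {b}, hA.union (Set.finite_singleton b), FCset a b F, replace_eq_XFC hab.symm hb⟩
    have step1 : FEStep (XF A F) (ReplaceWord [a] [a, d] (XF A F)) :=
      ⟨⟨A, hA, F, rfl⟩, hZshift, Or.inr (Or.inr (Or.inl ⟨a, d, haX, hdX, rfl⟩))⟩
    have step2 : FEStep (ReplaceWord [a] [a, d] (XF A F)) (ReplaceWord [a] [a, b] (XF A F)) :=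
      ⟨hZshift, hYshift, Or.inl (conj_expansions hab hd)⟩
    exact Relation.ReflTransGen.tail (Relation.ReflTransGen.single step1) step2
  · have he : ReplaceWord [a] [a, b] (XF A F) = XF A F :=
      replace_eq_self (fun x hx k hc => haX ⟨x, hx, k, hc⟩)
    rw [he]
    exact Relation.ReflTransGen.refl

end SymbDyn
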